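/- Let $m \geq 2$ be an integer, $\kappa \geq 0$ a real number, and $D>0$ with $\sqrt{\kappa}\,D < \pi/2$. Suppose $\lambda \in \mathbb{R}$ and $\varphi$ is a twice continuously differentiable real-valued function on $[-D/2,D/2]$ satisfying $\varphi''(t)-\big(4(m-1)T_{\kappa}(t)+3T_{4\kappa}(t)\big)\varphi'(t)=-\lambda\varphi(t)$ for all $t\in[-D/2,D/2]$, with Neumann boundary conditions $\varphi'(-D/2)=\varphi'(D/2)=0$, and such that $\varphi' \geq 0$ on $[-D/2,D/2]$ and $\varphi$ is not constant. Then for every $s\in(0,1)$, $\lambda \geq 4s(1-s)\frac{\pi^2}{D^2} + 4s(m+2)\kappa$. -/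

import Mathlib

open Real Set

/-- The function `T_κ` for `κ ≥ 0`: `T_κ(t) = √κ · tan(√κ t)` (so `T_0 ≡ 0`). -/
noncomputable def Tk (κ t : ℝ) : ℝ := Real.sqrt κ * Real.tan (Real.sqrt κ * t)

/-!
Let `b = 4(m-1) T_κ + 3 T_{4κ}` and `ρ = cos (√κ t) ^ (4(m-1)) * cos (2√κ t) ^ 3`, so that
`ρ' = -b ρ`. For any `g`, the function `Φ = ρ (φ'' φ' - g φ'²)` vanishes at both ends by the Neumann
conditions and, by the equation, `Φ' = ρ ((φ'' - g φ')² + (b g - g' - g² + b' - λ) φ'²)`.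
For `g = -4s(1-s) T_ν + (1-s) b` with `ν < π² / D²` the Riccati quantity `b g - g' - g² + b'` is
at least `4s(1-s) ν + s b' ≥ 4s(1-s) ν + 4s(m+2) κ`. If `λ` were smaller, `Φ` would be nondecreasing
with equal end values, hence constant; then `Φ' = 0` forces `φ' = 0`, and `φ` would be constant.
Finally let `ν ↑ π² / D²`.
-/

open Filter Topology

lemma eq_zero_of_hasDerivAt_of_nonneg_of_eq {f f' : ℝ → ℝ} {a b : ℝ}
    (hf : ContinuousOn f (Icc a b)) (hf' : ∀ x ∈ Ioo a b, HasDerivAt f (f' x) x)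
    (hf'₀ : ∀ x ∈ Ioo a b, 0 ≤ f' x) (hab : f a = f b) : ∀ x ∈ Ioo a b, f' x = 0 := by
  have hmono : MonotoneOn f (Icc a b) :=
    monotoneOn_of_hasDerivWithinAt_nonneg (convex_Icc a b) hf
      (fun x hx => (hf' x (by simpa using hx)).hasDerivWithinAt)
      (fun x hx => hf'₀ x (by simpa using hx))
  have hconst : ∀ x ∈ Icc a b, f x = f a := fun x hx =>
    le_antisymm (hab ▸ hmono hx ⟨hx.1.trans hx.2, le_rfl⟩ hx.2)
      (hmono ⟨le_rfl, hx.1.trans hx.2⟩ hx hx.1)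
  intro x hx
  have hloc : f =ᶠ[𝓝 x] fun _ => f a := eventually_of_mem (Icc_mem_nhds hx.1 hx.2) hconst
  exact (hf' x hx).unique ((hasDerivAt_const x (f a)).congr_of_eventuallyEq hloc)

section Riccati

variable {φ φ' φ'' β β' ρ g g' : ℝ → ℝ} {lam : ℝ}

/-- `β φ' - lam φ` stands for `φ''`, so that no third derivative of `φ` is needed. -/
lemma hasDerivAt_weighted_riccati {t : ℝ}
    (hφ : HasDerivAt φ (φ' t) t) (hφ' : HasDerivAt φ' (φ'' t) t)
    (hβ : HasDerivAt β (β' t) t) (hρ : HasDerivAt ρ (-β t * ρ t) t)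
    (hg : HasDerivAt g (g' t) t) (hode : φ'' t - β t * φ' t = -lam * φ t) :
    HasDerivAt (fun u => ρ u * ((β u * φ' u - lam * φ u) * φ' u - g u * φ' u ^ 2))
      (ρ t * ((φ'' t - g t * φ' t) ^ 2
        + (β t * g t - g' t - g t ^ 2 + β' t - lam) * φ' t ^ 2)) t := by
  refine (hρ.mul ((((hβ.mul hφ').sub (hφ.const_mul lam)).mul hφ').sub
    (hg.mul (hφ'.pow 2)))).congr_deriv ?_
  simp only [Pi.mul_apply, Pi.sub_apply, Pi.pow_apply]
  rw [show φ'' t = β t * φ' t - lam * φ t by linarith]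
  ring

theorem le_of_riccati_inequality {a b c : ℝ}
    (hφ : ∀ t ∈ Icc a b, HasDerivAt φ (φ' t) t) (hφ' : ∀ t ∈ Icc a b, HasDerivAt φ' (φ'' t) t)
    (hβ : ∀ t ∈ Icc a b, HasDerivAt β (β' t) t)
    (hρ : ∀ t ∈ Icc a b, HasDerivAt ρ (-β t * ρ t) t) (hρ₀ : ∀ t ∈ Icc a b, 0 < ρ t)
    (hg : ∀ t ∈ Icc a b, HasDerivAt g (g' t) t)
    (hode : ∀ t ∈ Icc a b, φ'' t - β t * φ' t = -lam * φ t)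
    (hric : ∀ t ∈ Icc a b, c ≤ β t * g t - g' t - g t ^ 2 + β' t)
    (ha : φ' a = 0) (hb : φ' b = 0) (hnc : ¬ ∀ t ∈ Icc a b, φ t = φ a) : c ≤ lam := by
  by_contra! hlt
  set Ψ := fun t => ρ t * ((φ'' t - g t * φ' t) ^ 2
    + (β t * g t - g' t - g t ^ 2 + β' t - lam) * φ' t ^ 2)
  have hΦ : ∀ t ∈ Icc a b, HasDerivAt
      (fun u => ρ u * ((β u * φ' u - lam * φ u) * φ' u - g u * φ' u ^ 2)) (Ψ t) t :=
    fun t ht => hasDerivAt_weighted_riccati (hφ t ht) (hφ' t ht) (hβ t ht) (hρ t ht) (hg t ht)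
      (hode t ht)
  have hΨ : ∀ t ∈ Icc a b, (c - lam) * (ρ t * φ' t ^ 2) ≤ Ψ t := fun t ht => by
    have hρt := (hρ₀ t ht).le
    nlinarith [mul_nonneg hρt (sq_nonneg (φ'' t - g t * φ' t)),
      mul_nonneg (mul_nonneg hρt (sub_nonneg.2 (hric t ht))) (sq_nonneg (φ' t))]
  have hΨ₀ : ∀ t ∈ Ioo a b, Ψ t = 0 :=
    eq_zero_of_hasDerivAt_of_nonneg_of_eq
      (fun t ht => (hΦ t ht).continuousAt.continuousWithinAt)
      (fun t ht => hΦ t (Ioo_subset_Icc_self ht))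
      (fun t ht => (mul_nonneg (sub_nonneg.2 hlt.le)
        (mul_nonneg (hρ₀ t (Ioo_subset_Icc_self ht)).le (sq_nonneg _))).trans
        (hΨ t (Ioo_subset_Icc_self ht)))
      (by simp [ha, hb])
  have hφ'₀ : ∀ t ∈ Ico a b, φ' t = 0 := by
    rintro t ⟨hat, htb⟩
    rcases hat.eq_or_lt with rfl | hat
    · exact ha
    have hle := hΨ t ⟨hat.le, htb.le⟩
    rw [hΨ₀ t ⟨hat, htb⟩] at hle
    have hρt := hρ₀ t ⟨hat.le, htb.le⟩
    have : φ' t ^ 2 ≤ 0 := by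
      by_contra! h
      linarith [mul_pos (sub_pos.2 hlt) (mul_pos hρt h)]
    exact pow_eq_zero_iff two_ne_zero |>.1 (le_antisymm this (sq_nonneg _))
  refine hnc (constant_of_has_deriv_right_zero
    (fun t ht => (hφ t ht).continuousAt.continuousWithinAt) fun t ht => ?_)
  exact hφ'₀ t ht ▸ (hφ t (Ico_subset_Icc_self ht)).hasDerivWithinAt

end Riccati

lemma cos_pos_of_mem_Icc_of_mul_lt_pi {c D t : ℝ} (hc : 0 ≤ c) (hcD : c * D < π)
    (ht : t ∈ Icc (-(D / 2)) (D / 2)) : 0 < cos (c * t) :=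
  cos_pos_of_mem_Ioo ⟨by nlinarith [ht.1], by nlinarith [ht.2]⟩

lemma hasDerivAt_Tk {κ t : ℝ} (hκ : 0 ≤ κ) (h : cos (√κ * t) ≠ 0) :
    HasDerivAt (Tk κ) (κ + Tk κ t ^ 2) t := by
  have hlin : HasDerivAt (fun u => √κ * u) √κ t := by
    simpa using (hasDerivAt_id t).const_mul √κ
  refine (((hasDerivAt_tan h).comp t hlin).const_mul √κ).congr_deriv ?_
  rw [Tk, tan_eq_sin_div_cos]
  field_simp
  rw [sq_sqrt hκ]
  linear_combination (-κ) * sin_sq_add_cos_sq (√κ * t)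

lemma hasDerivAt_cos_pow {κ t : ℝ} (n : ℕ) (h : cos (√κ * t) ≠ 0) :
    HasDerivAt (fun u => cos (√κ * u) ^ n) (-(n * Tk κ t) * cos (√κ * t) ^ n) t := by
  have hlin : HasDerivAt (fun u => √κ * u) √κ t := by
    simpa using (hasDerivAt_id t).const_mul √κ
  refine (hlin.cos.pow n).congr_deriv ?_
  rcases n with _ | n
  · simp
  rw [Tk, tan_eq_sin_div_cos, Nat.add_sub_cancel]
  field_simp
  ring


theorem le_of_Tk_drift {p q : ℕ} {κ κ' ν s D lam : ℝ} {φ φ' φ'' : ℝ → ℝ}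
    (hκ : 0 ≤ κ) (hκ' : 0 ≤ κ') (hν : 0 ≤ ν)
    (hκD : √κ * D < π) (hκ'D : √κ' * D < π) (hνD : √ν * D < π) (hs : s ∈ Icc (0 : ℝ) 1)
    (hφ : ∀ t ∈ Icc (-(D / 2)) (D / 2), HasDerivAt φ (φ' t) t)
    (hφ' : ∀ t ∈ Icc (-(D / 2)) (D / 2), HasDerivAt φ' (φ'' t) t)
    (hode : ∀ t ∈ Icc (-(D / 2)) (D / 2),
      φ'' t - (p * Tk κ t + q * Tk κ' t) * φ' t = -lam * φ t)
    (ha : φ' (-(D / 2)) = 0) (hb : φ' (D / 2) = 0)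
    (hnc : ¬ ∀ t ∈ Icc (-(D / 2)) (D / 2), φ t = φ (-(D / 2))) :
    4 * s * (1 - s) * ν + s * (p * κ + q * κ') ≤ lam := by
  have hcos {μ : ℝ} (hμD : √μ * D < π) {t : ℝ} (ht : t ∈ Icc (-(D / 2)) (D / 2)) :
      0 < cos (√μ * t) :=
    cos_pos_of_mem_Icc_of_mul_lt_pi (sqrt_nonneg μ) hμD ht
  refine le_of_riccati_inequality (β := fun t => p * Tk κ t + q * Tk κ' t)
    (β' := fun t => p * (κ + Tk κ t ^ 2) + q * (κ' + Tk κ' t ^ 2))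
    (ρ := fun t => cos (√κ * t) ^ p * cos (√κ' * t) ^ q)
    (g := fun t => -(4 * s * (1 - s)) * Tk ν t + (1 - s) * (p * Tk κ t + q * Tk κ' t))
    (g' := fun t => -(4 * s * (1 - s)) * (ν + Tk ν t ^ 2)
      + (1 - s) * (p * (κ + Tk κ t ^ 2) + q * (κ' + Tk κ' t ^ 2)))
    hφ hφ' (fun t ht => ?_) (fun t ht => ?_) (fun t ht => ?_) (fun t ht => ?_) hode
    (fun t ht => ?_) ha hb hnc
  · exact ((hasDerivAt_Tk hκ (hcos hκD ht).ne').const_mul _).add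
      ((hasDerivAt_Tk hκ' (hcos hκ'D ht).ne').const_mul _)
  · refine ((hasDerivAt_cos_pow p (hcos hκD ht).ne').mul
      (hasDerivAt_cos_pow q (hcos hκ'D ht).ne')).congr_deriv ?_
    ring
  · exact mul_pos (pow_pos (hcos hκD ht) p) (pow_pos (hcos hκ'D ht) q)
  · exact ((hasDerivAt_Tk hν (hcos hνD ht).ne').const_mul _).add
      ((((hasDerivAt_Tk hκ (hcos hκD ht).ne').const_mul _).add
      ((hasDerivAt_Tk hκ' (hcos hκ'D ht).ne').const_mul _)).const_mul _)
  · -- the Riccati quantity equals `4s(1-s) ν + s b' + s(1-s) (b + 2(1-2s) T_ν)²`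
    obtain ⟨hs₀, hs₁⟩ := hs
    have hsq := mul_nonneg (mul_nonneg hs₀ (sub_nonneg.2 hs₁))
      (sq_nonneg (p * Tk κ t + q * Tk κ' t + 2 * (1 - 2 * s) * Tk ν t))
    have hdrift : 0 ≤ s * (p * Tk κ t ^ 2 + q * Tk κ' t ^ 2) := by positivity
    linear_combination hsq + hdrift

theorem prop_1_2_general (m : ℕ) (hm : 2 ≤ m)
    (κ : ℝ) (hκ : 0 ≤ κ) (D : ℝ) (hD : 0 < D)
    (hDκ : Real.sqrt κ * D < Real.pi / 2)
    (lam : ℝ) (φ φ' φ'' : ℝ → ℝ)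
    (hd1 : ∀ t ∈ Icc (-(D / 2)) (D / 2), HasDerivAt φ (φ' t) t)
    (hd2 : ∀ t ∈ Icc (-(D / 2)) (D / 2), HasDerivAt φ' (φ'' t) t)
    (hODE : ∀ t ∈ Icc (-(D / 2)) (D / 2),
      φ'' t - (4 * ((m : ℝ) - 1) * Tk κ t + 3 * Tk (4 * κ) t) * φ' t = -lam * φ t)
    (hNeu₁ : φ' (-(D / 2)) = 0) (hNeu₂ : φ' (D / 2) = 0)
    (hnonconst : ¬ ∀ t ∈ Icc (-(D / 2)) (D / 2), φ t = φ (-(D / 2))) :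
    ∀ s ∈ Ioo (0 : ℝ) 1,
      4 * s * (1 - s) * Real.pi ^ 2 / D ^ 2 + 4 * s * ((m : ℝ) + 2) * κ ≤ lam := by
  intro s hs
  have hp : ((4 * (m - 1) : ℕ) : ℝ) = 4 * ((m : ℝ) - 1) := by
    push_cast [Nat.cast_sub (by omega : 1 ≤ m)]
    ring
  have h4κ : √(4 * κ) * D < π := by
    rw [sqrt_mul (by norm_num), show (4 : ℝ) = 2 ^ 2 by norm_num, sqrt_sq (by norm_num)]
    linarith
  have hbound : ∀ ν ∈ Ioo 0 ((π / D) ^ 2),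
      4 * s * (1 - s) * ν + 4 * s * ((m : ℝ) + 2) * κ ≤ lam := by
    intro ν hν
    have hνD : √ν * D < π := (lt_div_iff₀ hD).1 ((sqrt_lt' (by positivity)).2 hν.2)
    have h := le_of_Tk_drift (p := 4 * (m - 1)) (q := 3) hκ (by positivity) hν.1.le
      (by linarith [pi_pos]) h4κ hνD (Ioo_subset_Icc_self hs) hd1 hd2
      (fun t ht => by push_cast [hp]; exact hODE t ht) hNeu₁ hNeu₂ hnonconst
    rw [hp] at h
    linear_combination h
  have hlim : Tendsto (fun ν => 4 * s * (1 - s) * ν + 4 * s * ((m : ℝ) + 2) * κ)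
      (𝓝[<] ((π / D) ^ 2)) (𝓝 (4 * s * (1 - s) * (π / D) ^ 2 + 4 * s * ((m : ℝ) + 2) * κ)) :=
    (by fun_prop : Continuous fun ν : ℝ => 4 * s * (1 - s) * ν + 4 * s * ((m : ℝ) + 2) * κ)
      |>.continuousWithinAt
  have h := le_of_tendsto hlim (eventually_of_mem (Ioo_mem_nhdsLT (by positivity)) hbound)
  rwa [div_pow, ← mul_div_assoc] at h

/-- **Proposition 1.2.** Explicit lower bound for the one-dimensional comparison
eigenvalue arising in the quaternion-Kähler setting: any nonconstant monotone
Neumann eigenfunction of `φ'' - (4(m-1)T_κ + 3T_{4κ}) φ' = -λ φ` on `[-D/2, D/2]`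
has eigenvalue `λ ≥ 4s(1-s)π²/D² + 4s(m+2)κ` for every `s ∈ (0,1)`. -/
theorem prop_1_2 (m : ℕ) (hm : 2 ≤ m)
    (κ : ℝ) (hκ : 0 ≤ κ) (D : ℝ) (hD : 0 < D)
    (hDκ : Real.sqrt κ * D < Real.pi / 2)
    (lam : ℝ) (φ φ' φ'' : ℝ → ℝ)
    (hd1 : ∀ t ∈ Icc (-(D / 2)) (D / 2), HasDerivAt φ (φ' t) t)
    (hd2 : ∀ t ∈ Icc (-(D / 2)) (D / 2), HasDerivAt φ' (φ'' t) t)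
    (hc2 : ContinuousOn φ'' (Icc (-(D / 2)) (D / 2)))
    (hODE : ∀ t ∈ Icc (-(D / 2)) (D / 2),
      φ'' t - (4 * ((m : ℝ) - 1) * Tk κ t + 3 * Tk (4 * κ) t) * φ' t = -lam * φ t)
    (hNeu₁ : φ' (-(D / 2)) = 0) (hNeu₂ : φ' (D / 2) = 0)
    (hmono : ∀ t ∈ Icc (-(D / 2)) (D / 2), 0 ≤ φ' t)
    (hnonconst : ¬ ∀ t ∈ Icc (-(D / 2)) (D / 2), φ t = φ (-(D / 2))) :
    ∀ s ∈ Ioo (0 : ℝ) 1,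
      4 * s * (1 - s) * Real.pi ^ 2 / D ^ 2 + 4 * s * ((m : ℝ) + 2) * κ ≤ lam :=
  prop_1_2_general m hm κ hκ D hD hDκ lam φ φ' φ'' hd1 hd2 hODE hNeu₁ hNeu₂ hnonconst
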